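/- Let f : (0,∞) → ℝ be non-decreasing and concave with lim_{x↓0} f(x) = −∞, p̂ ∈ Δ(V) with p̂_1 ≥ … ≥ p̂_d > 0, and p̂_d ≤ ε < p̂_1. Let î = max{i : p̂_i > ε}. Then for every q ∈ Δ(V) with q_i = 0 for all i > î, the infimum over p ∈ N(p̂) of Σ_i q_i f(p_i) (in the extended reals) equals Σ_i q_i f(p̂_i) − max_{1 ≤ i ≤ î} q_i g⁻(p̂_i), where g⁻(x) = f(x) − f(x − ε). -/

import Mathlib

open Finset

def simplex (d : ℕ) : Set (Fin d → ℝ) := {p | (∀ i, 0 ≤ p i) ∧ ∑ i, p i = 1}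

noncomputable def dTV {d : ℕ} (p q : Fin d → ℝ) : ℝ := (∑ i, |p i - q i|) / 2

def nbhd {d : ℕ} (phat : Fin d → ℝ) (ε : ℝ) : Set (Fin d → ℝ) :=
  {p | p ∈ simplex d ∧ dTV p phat ≤ ε}

/-- `f` extended to `[0,∞)` (and below) with value `−∞` for nonpositive arguments. -/
noncomputable def fext (f : ℝ → ℝ) (x : ℝ) : EReal := if x ≤ 0 then ⊥ else ((f x : ℝ) : EReal)

/-- The extended-real objective `Σ_i q_i f(p_i)` with the convention `0 · (−∞) = 0`. -/
noncomputable def objf {d : ℕ} (f : ℝ → ℝ) (q p : Fin d → ℝ) : EReal :=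
  ∑ i, ((q i : ℝ) : EReal) * fext f (p i)

/-!
Shifting mass `ε` from a coordinate `i` to a coordinate outside the support of `q` stays in the
ball and costs exactly `q_i g⁻(p̂_i)`, which gives the upper bound. Conversely, every `p` in the
ball has total deficit `Σ_j (p̂_j - p_j)⁺ = d_TV(p, p̂) ≤ ε`, and by concavity a deficit `δ_j`
costs at most `(δ_j / ε) q_j g⁻(p̂_j)`; summing gives the matching lower bound.
-/

lemma EReal.coe_finset_sum {α : Type*} (s : Finset α) (g : α → ℝ) :
    ((∑ i ∈ s, g i : ℝ) : EReal) = ∑ i ∈ s, (g i : EReal) :=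
  map_sum (⟨⟨Real.toEReal, EReal.coe_zero⟩, EReal.coe_add⟩ : ℝ →+ EReal) g s

section Concave

variable {f : ℝ → ℝ} {ε x y : ℝ}

lemma sub_le_posPart_div_mul_of_concaveOn (hmono : MonotoneOn f (Set.Ioi 0))
    (hconc : ConcaveOn ℝ (Set.Ioi 0) f) (hε : 0 < ε) (hx : ε < x) (hy : x - ε ≤ y) :
    f x - f y ≤ max (x - y) 0 / ε * (f x - f (x - ε)) := by
  rcases le_or_gt x y with hxy | hyx
  · have hfxy := hmono (Set.mem_Ioi.2 (by linarith : 0 < x)) (Set.mem_Ioi.2 (by linarith : 0 < y))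
      hxy
    rw [max_eq_right (by linarith), zero_div, zero_mul]
    linarith
  · set t := (x - y) / ε with ht
    have ht0 : 0 ≤ t := div_nonneg (by linarith) hε.le
    have ht1 : t ≤ 1 := (div_le_one hε).2 (by linarith)
    have hcomb : (1 - t) • x + t • (x - ε) = y := by
      simp only [smul_eq_mul, ht]; field_simp; ring
    have hchord := hconc.2 (Set.mem_Ioi.2 (by linarith : 0 < x))
      (Set.mem_Ioi.2 (by linarith : 0 < x - ε)) (by linarith : 0 ≤ 1 - t) ht0 (by ring)
    rw [hcomb, smul_eq_mul, smul_eq_mul] at hchord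
    rw [max_eq_left (by linarith)]
    linarith

end Concave

section TotalVariation

variable {d : ℕ} {p phat : Fin d → ℝ} {ε : ℝ}

lemma sum_posPart_sub_eq_dTV (hp : p ∈ simplex d) (hphat : phat ∈ simplex d) :
    ∑ j, max (phat j - p j) 0 = dTV p phat := by
  have hpoint : ∀ j, max (phat j - p j) 0 = (|p j - phat j| + (phat j - p j)) / 2 := by
    intro j
    rw [abs_sub_comm]
    rcases le_total 0 (phat j - p j) with h | h
    · rw [max_eq_left h, abs_of_nonneg h]; ring
    · rw [max_eq_right h, abs_of_nonpos h]; ring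
  have hzero : ∑ j, (phat j - p j) = 0 := by
    rw [Finset.sum_sub_distrib, hp.2, hphat.2, sub_self]
  rw [Finset.sum_congr rfl fun j _ => hpoint j, ← Finset.sum_div, Finset.sum_add_distrib, hzero,
    add_zero, dTV]

lemma sub_le_of_mem_nbhd (hphat : phat ∈ simplex d) (hp : p ∈ nbhd phat ε) (i : Fin d) :
    phat i - ε ≤ p i := by
  have hi : max (phat i - p i) 0 ≤ ∑ j, max (phat j - p j) 0 :=
    Finset.single_le_sum (f := fun j => max (phat j - p j) 0)
      (fun j _ => le_max_right _ _) (Finset.mem_univ i)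
  rw [sum_posPart_sub_eq_dTV hp.1 hphat] at hi
  linarith [le_max_left (phat i - p i) 0, hp.2]

lemma add_single_sub_single_mem_nbhd (hphat : phat ∈ simplex d) {i j : Fin d} (hij : i ≠ j)
    (hε : 0 ≤ ε) (hεi : ε ≤ phat i) : phat + Pi.single j ε - Pi.single i ε ∈ nbhd phat ε := by
  refine ⟨⟨fun k => ?_, ?_⟩, ?_⟩
  · by_cases hki : k = i
    · subst hki; simp [hij, hεi]
    · simpa [hki] using add_nonneg (hphat.1 k) (Pi.single_nonneg.2 hε k : (0 : Fin d → ℝ) k ≤ _)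
  · simp [Finset.sum_add_distrib, hphat.2]
  · have habs : ∀ k, |(phat + Pi.single j ε - Pi.single i ε : Fin d → ℝ) k - phat k|
        = (Pi.single j ε : Fin d → ℝ) k + (Pi.single i ε : Fin d → ℝ) k := by
      intro k
      by_cases hkj : k = j
      · subst hkj; simp [Ne.symm hij, abs_of_nonneg hε]
      · by_cases hki : k = i
        · subst hki; simp [hkj, abs_of_nonneg hε]
        · simp [hkj, hki]
    simp only [dTV, habs, Finset.sum_add_distrib, Finset.sum_pi_single', Finset.mem_univ, if_true]
    linarith

end TotalVariation

section Objective

variable {d : ℕ} {f : ℝ → ℝ} {q p phat : Fin d → ℝ} {ε : ℝ}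

lemma objf_eq_coe_sum (hp : ∀ i, q i ≠ 0 → 0 < p i) :
    objf f q p = ((∑ i, q i * f (p i) : ℝ) : EReal) := by
  rw [objf, EReal.coe_finset_sum]
  refine Finset.sum_congr rfl fun i _ => ?_
  by_cases hqi : q i = 0
  · simp [hqi]
  · rw [fext, if_neg (not_le.2 (hp i hqi)), EReal.coe_mul]

lemma objf_add_single_sub_single (hpos : ∀ k, q k ≠ 0 → 0 < phat k) {i j : Fin d} (hij : i ≠ j)
    (hεi : ε < phat i) (hqj : q j = 0) :
    objf f q (phat + Pi.single j ε - Pi.single i ε)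
      = ((∑ k, q k * f (phat k) - q i * (f (phat i) - f (phat i - ε)) : ℝ) : EReal) := by
  set p : Fin d → ℝ := phat + Pi.single j ε - Pi.single i ε
  have hpi : p i = phat i - ε := by simp [p, hij]
  have hpk : ∀ k, k ≠ i → k ≠ j → p k = phat k := fun k hki hkj => by simp [p, hki, hkj]
  have hsupp : ∀ k, q k ≠ 0 → 0 < p k := by
    intro k hqk
    have hkj : k ≠ j := fun h => hqk (h ▸ hqj)
    by_cases hki : k = i
    · subst hki; rw [hpi]; linarith
    · rw [hpk k hki hkj]; exact hpos k hqk
  have hdiff : ∑ k, (q k * f (p k) - q k * f (phat k)) = q i * (f (phat i - ε) - f (phat i)) := by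
    rw [Finset.sum_eq_single i (fun k _ hki => ?_) (by simp), hpi]
    · ring
    by_cases hkj : k = j
    · simp [hkj, hqj]
    · rw [hpk k hki hkj, sub_self]
  rw [Finset.sum_sub_distrib] at hdiff
  rw [objf_eq_coe_sum hsupp, EReal.coe_eq_coe_iff]
  linarith

lemma sum_sub_le_objf_of_mem_nbhd (hmono : MonotoneOn f (Set.Ioi 0))
    (hconc : ConcaveOn ℝ (Set.Ioi 0) f) (hphat : phat ∈ simplex d) (hε : 0 < ε)
    (hq : ∀ i, 0 ≤ q i) (hsupp : ∀ i, q i ≠ 0 → ε < phat i) {M : ℝ} (hM0 : 0 ≤ M)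
    (hM : ∀ i, q i ≠ 0 → q i * (f (phat i) - f (phat i - ε)) ≤ M) (hp : p ∈ nbhd phat ε) :
    ((∑ i, q i * f (phat i) - M : ℝ) : EReal) ≤ objf f q p := by
  have hp_ge := sub_le_of_mem_nbhd hphat hp
  set δ : Fin d → ℝ := fun j => max (phat j - p j) 0
  have hterm : ∀ j, q j * f (phat j) - q j * f (p j) ≤ δ j / ε * M := by
    intro j
    by_cases hqj : q j = 0
    · have : 0 ≤ δ j / ε * M := by positivity
      simpa [hqj] using this
    · calc q j * f (phat j) - q j * f (p j) = q j * (f (phat j) - f (p j)) := by ring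
        _ ≤ q j * (δ j / ε * (f (phat j) - f (phat j - ε))) :=
          mul_le_mul_of_nonneg_left
            (sub_le_posPart_div_mul_of_concaveOn hmono hconc hε (hsupp j hqj) (hp_ge j)) (hq j)
        _ = δ j / ε * (q j * (f (phat j) - f (phat j - ε))) := by ring
        _ ≤ δ j / ε * M := mul_le_mul_of_nonneg_left (hM j hqj) (by positivity)
  have hδ : ∑ j, δ j / ε ≤ 1 := by
    rw [← Finset.sum_div, sum_posPart_sub_eq_dTV hp.1 hphat]
    exact (div_le_one hε).2 hp.2
  have hsum : ∑ j, q j * f (phat j) - ∑ j, q j * f (p j) ≤ M :=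
    calc ∑ j, q j * f (phat j) - ∑ j, q j * f (p j)
        = ∑ j, (q j * f (phat j) - q j * f (p j)) := (Finset.sum_sub_distrib _ _).symm
      _ ≤ ∑ j, δ j / ε * M := Finset.sum_le_sum fun j _ => hterm j
      _ = (∑ j, δ j / ε) * M := (Finset.sum_mul _ _ _).symm
      _ ≤ M := mul_le_of_le_one_left hM0 hδ
  rw [objf_eq_coe_sum fun i hqi => by linarith [hsupp i hqi, hp_ge i]]
  exact EReal.coe_le_coe_iff.2 (by linarith)

theorem iInf_objf_nbhd_eq (hmono : MonotoneOn f (Set.Ioi 0))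
    (hconc : ConcaveOn ℝ (Set.Ioi 0) f) (hphat : phat ∈ simplex d) (hε : 0 < ε)
    (hq : ∀ k, 0 ≤ q k) (hsupp : ∀ k, q k ≠ 0 → ε < phat k) {i j : Fin d} (hεi : ε < phat i)
    (hij : i ≠ j) (hqj : q j = 0)
    (hmax : ∀ k, q k ≠ 0 →
      q k * (f (phat k) - f (phat k - ε)) ≤ q i * (f (phat i) - f (phat i - ε))) :
    ⨅ p ∈ nbhd phat ε, objf f q p
      = ((∑ k, q k * f (phat k) - q i * (f (phat i) - f (phat i - ε)) : ℝ) : EReal) := by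
  have hgap : 0 ≤ q i * (f (phat i) - f (phat i - ε)) :=
    mul_nonneg (hq i) (sub_nonneg.2 (hmono (Set.mem_Ioi.2 (by linarith))
      (Set.mem_Ioi.2 (by linarith)) (by linarith)))
  refine le_antisymm ?_ (le_iInf₂ fun p hp =>
    sum_sub_le_objf_of_mem_nbhd hmono hconc hphat hε hq hsupp hgap hmax hp)
  exact iInf₂_le_of_le _ (add_single_sub_single_mem_nbhd hphat hij hε.le hεi.le)
    (objf_add_single_sub_single (fun k hqk => hε.trans (hsupp k hqk)) hij hεi hqj).le

end Objective

/-- closed form of the inner minimization for a general objective `f`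
in the large-budget case `p̂_d ≤ ε < p̂_1`, on strategies supported in `{1,…,î}`. -/
theorem stmt6 {d : ℕ} (hd : 0 < d) (f : ℝ → ℝ)
    (hmono : MonotoneOn f (Set.Ioi 0))
    (hconc : ConcaveOn ℝ (Set.Ioi 0) f)
    (phat : Fin d → ℝ) (ε : ℝ)
    (hmem : phat ∈ simplex d)
    (hpos : ∀ i, 0 < phat i)
    (hsort : ∀ i j : Fin d, i ≤ j → phat j ≤ phat i)
    (heps_lo : phat ⟨d - 1, by omega⟩ ≤ ε)
    (ihat : Fin d)
    (hihat1 : ε < phat ihat)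
    (q : Fin d → ℝ) (hq : q ∈ simplex d)
    (hqz : ∀ i : Fin d, ihat < i → q i = 0) :
    ⨅ p ∈ nbhd phat ε, objf f q p
      = (((∑ i, q i * f (phat i))
          - sSup {x : ℝ | ∃ i : Fin d, i ≤ ihat ∧
              x = q i * (f (phat i) - f (phat i - ε))} : ℝ) : EReal) := by
  set last : Fin d := ⟨d - 1, by omega⟩
  have hε : 0 < ε := (hpos last).trans_le heps_lo
  have hlast : ihat < last := lt_of_le_of_ne (Fin.le_iff_val_le_val.2 (by simp [last]; omega))
    fun h => (hihat1.trans_le (h ▸ heps_lo)).false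
  have hsupp : ∀ k, q k ≠ 0 → k ≤ ihat := fun k hqk => not_lt.1 (mt (hqz k) hqk)
  obtain ⟨istar, histar, hmax⟩ := (Finset.Iic ihat).exists_max_image
    (fun k => q k * (f (phat k) - f (phat k - ε))) ⟨ihat, Finset.mem_Iic.2 le_rfl⟩
  rw [Finset.mem_Iic] at histar
  have hsSup : sSup {x : ℝ | ∃ i : Fin d, i ≤ ihat ∧ x = q i * (f (phat i) - f (phat i - ε))}
      = q istar * (f (phat istar) - f (phat istar - ε)) :=
    IsGreatest.csSup_eq ⟨⟨istar, histar, rfl⟩, by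
      rintro _ ⟨k, hk, rfl⟩; exact hmax k (Finset.mem_Iic.2 hk)⟩
  rw [hsSup]
  exact iInf_objf_nbhd_eq hmono hconc hmem hε hq.1
    (fun k hqk => hihat1.trans_le (hsort _ _ (hsupp k hqk))) (hihat1.trans_le (hsort _ _ histar))
    (histar.trans_lt hlast).ne (hqz _ hlast) fun k hqk => hmax k (Finset.mem_Iic.2 (hsupp k hqk))
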